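/- Every alternating LTL formula ξ satisfies ξ ≡ Xξ, i.e., for every alphabet Σ and every infinite word w ∈ Σ^ω, w ⊨ ξ if and only if w ⊨ Xξ. -/
import Mathlib


/-- Syntax of LTL formulae over atomic propositions `AP`. -/
inductive LTL (AP : Type) : Type
  | tt    : LTL AP
  | atom  : AP → LTL AP
  | not   : LTL AP → LTL AP
  | or    : LTL AP → LTL AP → LTL AP
  | and   : LTL AP → LTL AP → LTL AP
  | next  : LTL AP → LTL AP
  | untl  : LTL AP → LTL AP → LTL AP

namespace LTL

/-- Derived operator `F` (eventually). -/
def F {AP : Type} (φ : LTL AP) : LTL AP := untl tt φ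

/-- Derived operator `G` (always). -/
def G {AP : Type} (φ : LTL AP) : LTL AP := not (F (not φ))

/-- Derived operator `R` (release). -/
def R {AP : Type} (φ ψ : LTL AP) : LTL AP := not (untl (not φ) (not ψ))

end LTL

/-- The `k`-th suffix of an infinite word. -/
def suffix {AP : Type} (w : ℕ → Set AP) (k : ℕ) : ℕ → Set AP :=
  fun i => w (i + k)

/-- Concatenation of a finite word `u` with an infinite word `w`. -/
def cat {AP : Type} (u : List (Set AP)) (w : ℕ → Set AP) : ℕ → Set AP :=
  fun i => if h : i < u.length then u.get ⟨i, h⟩ else w (i - u.length)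

/-- Satisfaction relation `w ⊨ φ` of LTL over infinite words `w : ℕ → Set AP`. -/
def Sat {AP : Type} : LTL AP → (ℕ → Set AP) → Prop
  | .tt, _ => True
  | .atom a, w => a ∈ w 0
  | .not φ, w => ¬ Sat φ w
  | .or φ ψ, w => Sat φ w ∨ Sat ψ w
  | .and φ ψ, w => Sat φ w ∧ Sat ψ w
  | .next φ, w => Sat φ (suffix w 1)
  | .untl φ ψ, w => ∃ i, Sat ψ (suffix w i) ∧ ∀ j < i, Sat φ (suffix w j)

/-- Pure eventuality formulae: μ ::= Fφ | μ∨μ | μ∧μ | Xμ | φUμ | μRμ | Gμ. -/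
inductive PureEventuality {AP : Type} : LTL AP → Prop
  | fin (φ : LTL AP) : PureEventuality (LTL.F φ)
  | or {μ₁ μ₂ : LTL AP} : PureEventuality μ₁ → PureEventuality μ₂ →
      PureEventuality (LTL.or μ₁ μ₂)
  | and {μ₁ μ₂ : LTL AP} : PureEventuality μ₁ → PureEventuality μ₂ →
      PureEventuality (LTL.and μ₁ μ₂)
  | next {μ : LTL AP} : PureEventuality μ → PureEventuality (LTL.next μ)
  | untl (φ : LTL AP) {μ : LTL AP} : PureEventuality μ →
      PureEventuality (LTL.untl φ μ)
  | rel {μ₁ μ₂ : LTL AP} : PureEventuality μ₁ → PureEventuality μ₂ →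
      PureEventuality (LTL.R μ₁ μ₂)
  | glob {μ : LTL AP} : PureEventuality μ → PureEventuality (LTL.G μ)

/-- Pure universality formulae: ν ::= Gφ | ν∨ν | ν∧ν | Xν | νUν | φRν | Fν. -/
inductive PureUniversality {AP : Type} : LTL AP → Prop
  | glob (φ : LTL AP) : PureUniversality (LTL.G φ)
  | or {ν₁ ν₂ : LTL AP} : PureUniversality ν₁ → PureUniversality ν₂ →
      PureUniversality (LTL.or ν₁ ν₂)
  | and {ν₁ ν₂ : LTL AP} : PureUniversality ν₁ → PureUniversality ν₂ →
      PureUniversality (LTL.and ν₁ ν₂)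
  | next {ν : LTL AP} : PureUniversality ν → PureUniversality (LTL.next ν)
  | untl {ν₁ ν₂ : LTL AP} : PureUniversality ν₁ → PureUniversality ν₂ →
      PureUniversality (LTL.untl ν₁ ν₂)
  | rel (φ : LTL AP) {ν : LTL AP} : PureUniversality ν →
      PureUniversality (LTL.R φ ν)
  | fin {ν : LTL AP} : PureUniversality ν → PureUniversality (LTL.F ν)

/-- Alternating formulae: ξ ::= Gμ | Fν | ξ∨ξ | ξ∧ξ | Xξ | φUξ | φRξ | Fξ | Gξ. -/
inductive Alternating {AP : Type} : LTL AP → Prop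
  | globEv {μ : LTL AP} : PureEventuality μ → Alternating (LTL.G μ)
  | finUniv {ν : LTL AP} : PureUniversality ν → Alternating (LTL.F ν)
  | or {ξ₁ ξ₂ : LTL AP} : Alternating ξ₁ → Alternating ξ₂ →
      Alternating (LTL.or ξ₁ ξ₂)
  | and {ξ₁ ξ₂ : LTL AP} : Alternating ξ₁ → Alternating ξ₂ →
      Alternating (LTL.and ξ₁ ξ₂)
  | next {ξ : LTL AP} : Alternating ξ → Alternating (LTL.next ξ)
  | untl (φ : LTL AP) {ξ : LTL AP} : Alternating ξ → Alternating (LTL.untl φ ξ)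
  | rel (φ : LTL AP) {ξ : LTL AP} : Alternating ξ → Alternating (LTL.R φ ξ)
  | fin {ξ : LTL AP} : Alternating ξ → Alternating (LTL.F ξ)
  | glob {ξ : LTL AP} : Alternating ξ → Alternating (LTL.G ξ)

/-! ### Auxiliary lemmas -/

lemma suffix_zero {AP : Type} (w : ℕ → Set AP) : suffix w 0 = w := by
  funext i; simp [suffix]

lemma suffix_comp {AP : Type} (w : ℕ → Set AP) (a b : ℕ) :
    suffix (suffix w a) b = suffix w (b + a) := by
  funext i; simp [suffix, Nat.add_assoc]

lemma suffix_one {AP : Type} (w : ℕ → Set AP) (n : ℕ) :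
    suffix (suffix w 1) n = suffix w (n + 1) := by
  rw [suffix_comp]

lemma sat_F {AP : Type} (φ : LTL AP) (w : ℕ → Set AP) :
    Sat (LTL.F φ) w ↔ ∃ i, Sat φ (suffix w i) := by
  simp [LTL.F, Sat]

lemma sat_G {AP : Type} (φ : LTL AP) (w : ℕ → Set AP) :
    Sat (LTL.G φ) w ↔ ∀ i, Sat φ (suffix w i) := by
  simp [LTL.G, LTL.F, Sat]

lemma sat_R {AP : Type} (φ ψ : LTL AP) (w : ℕ → Set AP) :
    Sat (LTL.R φ ψ) w ↔
      ¬ ∃ i, ¬ Sat ψ (suffix w i) ∧ ∀ j < i, ¬ Sat φ (suffix w j) := by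
  simp [LTL.R, Sat]

/-- Iterate a one-step backward closure. -/
lemma iter_back {AP : Type} {ψ : LTL AP}
    (h : ∀ v, Sat ψ (suffix v 1) → Sat ψ v) :
    ∀ (k : ℕ) (w : ℕ → Set AP), Sat ψ (suffix w k) → Sat ψ w := by
  intro k
  induction k with
  | zero => intro w hw; rwa [suffix_zero] at hw
  | succ n ih =>
      intro w hw
      apply ih
      apply h
      rwa [suffix_comp, Nat.add_comm 1 n]
  
/-- Iterate a one-step forward closure. -/
lemma iter_fwd {AP : Type} {ψ : LTL AP}
    (h : ∀ v, Sat ψ v → Sat ψ (suffix v 1)) :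
    ∀ (k : ℕ) (w : ℕ → Set AP), Sat ψ w → Sat ψ (suffix w k) := by
  intro k
  induction k with
  | zero => intro w hw; rwa [suffix_zero]
  | succ n ih =>
      intro w hw
      rw [show n + 1 = 1 + n from Nat.add_comm n 1, ← suffix_comp]
      exact h _ (ih w hw)

/-- Pure eventuality formulae: satisfaction at the 1-suffix yields satisfaction. -/
lemma pe_back {AP : Type} {μ : LTL AP} (h : PureEventuality μ) :
    ∀ w, Sat μ (suffix w 1) → Sat μ w := by
  induction h with
  | fin φ =>
      intro w hw
      rw [sat_F] at hw ⊢
      obtain ⟨i, hi⟩ := hw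
      rw [suffix_one] at hi
      exact ⟨i + 1, hi⟩
  | or h1 h2 ih1 ih2 =>
      intro w hw
      exact Or.imp (ih1 w) (ih2 w) hw
  | and h1 h2 ih1 ih2 =>
      intro w hw
      exact And.imp (ih1 w) (ih2 w) hw
  | next h ih =>
      intro w hw
      exact ih (suffix w 1) hw
  | untl φ h ih =>
      intro w hw
      obtain ⟨i, hi, -⟩ := hw
      rw [suffix_one] at hi
      have hμ : Sat _ w := iter_back ih (i + 1) w hi
      exact ⟨0, by rwa [suffix_zero], fun j hj => absurd hj (Nat.not_lt_zero j)⟩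
  | rel h1 h2 ih1 ih2 =>
      intro w hw
      rw [sat_R] at hw ⊢
      rintro ⟨i, hni, hj⟩
      match i, hni, hj with
      | 0, hni, hj =>
          rw [suffix_zero] at hni
          refine hni (ih2 w ?_)
          by_contra hc
          exact hw ⟨0, by rwa [suffix_zero], fun j hj => absurd hj (Nat.not_lt_zero j)⟩
      | (n+1), hni, hj =>
          refine hw ⟨n, by rwa [suffix_one], fun j hjn => ?_⟩
          rw [suffix_one]
          exact hj (j + 1) (by omega)
  | glob h ih =>
      intro w hw
      rw [sat_G] at hw ⊢
      intro i
      match i with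
      | 0 =>
          rw [suffix_zero]
          apply ih
          have := hw 0
          rwa [suffix_zero] at this
      | (n+1) =>
          have := hw n
          rwa [suffix_one] at this

/-- Pure universality formulae: satisfaction yields satisfaction at the 1-suffix. -/
lemma pu_fwd {AP : Type} {ν : LTL AP} (h : PureUniversality ν) :
    ∀ w, Sat ν w → Sat ν (suffix w 1) := by
  induction h with
  | glob φ =>
      intro w hw
      rw [sat_G] at hw ⊢
      intro i
      rw [suffix_one]
      exact hw (i + 1)
  | or h1 h2 ih1 ih2 =>
      intro w hw
      exact Or.imp (ih1 w) (ih2 w) hw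
  | and h1 h2 ih1 ih2 =>
      intro w hw
      exact And.imp (ih1 w) (ih2 w) hw
  | next h ih =>
      intro w hw
      exact ih (suffix w 1) hw
  | untl h1 h2 ih1 ih2 =>
      intro w hw
      obtain ⟨i, hi, hj⟩ := hw
      match i, hi, hj with
      | 0, hi, hj =>
          rw [suffix_zero] at hi
          exact ⟨0, by rw [suffix_zero]; exact ih2 w hi,
            fun j hj => absurd hj (Nat.not_lt_zero j)⟩
      | (n+1), hi, hj =>
          refine ⟨n, by rwa [suffix_one], fun j hjn => ?_⟩
          rw [suffix_one]
          exact hj (j + 1) (by omega)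
  | @rel φ ν h ih =>
      intro w hw
      rw [sat_R] at hw ⊢
      have hν : Sat ν w := by
        by_contra hc
        exact hw ⟨0, by rwa [suffix_zero], fun j hj => absurd hj (Nat.not_lt_zero j)⟩
      rintro ⟨i, hni, -⟩
      rw [suffix_one] at hni
      exact hni (iter_fwd ih (i + 1) w hν)
  | fin h ih =>
      intro w hw
      rw [sat_F] at hw ⊢
      obtain ⟨i, hi⟩ := hw
      match i, hi with
      | 0, hi =>
          rw [suffix_zero] at hi
          exact ⟨0, by rw [suffix_zero]; exact ih w hi⟩
      | (n+1), hi =>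
          exact ⟨n, by rwa [suffix_one]⟩

lemma alternating_shift {AP : Type} {ξ : LTL AP} (h : Alternating ξ) :
    ∀ w, Sat ξ w ↔ Sat ξ (suffix w 1) := by
  induction h with
  | globEv hμ =>
      intro w
      rw [sat_G, sat_G]
      constructor
      · intro hall i
        rw [suffix_one]
        exact hall (i + 1)
      · intro hall i
        match i with
        | 0 =>
            rw [suffix_zero]
            apply pe_back hμ
            have := hall 0
            rwa [suffix_zero] at this
        | (n+1) =>
            have := hall n
            rwa [suffix_one] at this
  | finUniv hν =>
      intro w
      rw [sat_F, sat_F]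
      constructor
      · rintro ⟨i, hi⟩
        match i, hi with
        | 0, hi =>
            rw [suffix_zero] at hi
            exact ⟨0, by rw [suffix_zero]; exact pu_fwd hν w hi⟩
        | (n+1), hi =>
            exact ⟨n, by rwa [suffix_one]⟩
      · rintro ⟨i, hi⟩
        rw [suffix_one] at hi
        exact ⟨i + 1, hi⟩
  | or h1 h2 ih1 ih2 =>
      intro w
      exact or_congr (ih1 w) (ih2 w)
  | and h1 h2 ih1 ih2 =>
      intro w
      exact and_congr (ih1 w) (ih2 w)
  | next h ih =>
      intro w
      exact ih (suffix w 1)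
  | @untl φ ξ h ih =>
      have claim : ∀ v, Sat (LTL.untl φ ξ) v ↔ Sat ξ v := by
        intro v
        constructor
        · rintro ⟨i, hi, -⟩
          exact iter_back (fun u => (ih u).mpr) i v hi
        · intro hv
          exact ⟨0, by rwa [suffix_zero], fun j hj => absurd hj (Nat.not_lt_zero j)⟩
      intro w
      rw [claim w, claim (suffix w 1)]
      exact ih w
  | @rel φ ξ h ih =>
      have claim : ∀ v, Sat (LTL.R φ ξ) v ↔ Sat ξ v := by
        intro v
        rw [sat_R]
        constructor
        · intro hv
          by_contra hc
          exact hv ⟨0, by rwa [suffix_zero], fun j hj => absurd hj (Nat.not_lt_zero j)⟩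
        · intro hv
          rintro ⟨i, hni, -⟩
          exact hni (iter_fwd (fun u => (ih u).mp) i v hv)
      intro w
      rw [claim w, claim (suffix w 1)]
      exact ih w
  | @fin ξ h ih =>
      have claim : ∀ v, Sat (LTL.F ξ) v ↔ Sat ξ v := by
        intro v
        rw [sat_F]
        constructor
        · rintro ⟨i, hi⟩
          exact iter_back (fun u => (ih u).mpr) i v hi
        · intro hv
          exact ⟨0, by rwa [suffix_zero]⟩
      intro w
      rw [claim w, claim (suffix w 1)]
      exact ih w
  | @glob ξ h ih =>
      have claim : ∀ v, Sat (LTL.G ξ) v ↔ Sat ξ v := by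
        intro v
        rw [sat_G]
        constructor
        · intro hv
          have := hv 0
          rwa [suffix_zero] at this
        · intro hv i
          exact iter_fwd (fun u => (ih u).mp) i v hv
      intro w
      rw [claim w, claim (suffix w 1)]
      exact ih w

theorem alternating_equiv_next :
    ∀ (AP : Type) (ξ : LTL AP), Alternating ξ →
      ∀ (w : ℕ → Set AP), Sat ξ w ↔ Sat (LTL.next ξ) w := by
  intro AP ξ h w
  exact alternating_shift h w
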